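/- arXiv:1309.3217 — 5 statements merged into one kernel-verified Lean document; each statement's English description precedes it below -/
import Mathlib

section
/- Let π be a strictly positive joint probability density on ℝ^m × ℝ^n and let (Ψ1, Ψ2) ~ π and Ψ1' ~ π₁ be drawn independently of (Ψ1, Ψ2). Then the expected value of the ratio of the two acceptance probabilities, E[π(Ψ2 | Ψ1) / π(Ψ2 | Ψ1')], is at least 1; that is, ∫∫∫ [π(y|x) / π(y|x')] · π(x,y) · π₁(x') dx' dy dx ≥ 1, where the integral is taken in the extended nonnegative reals. (This is the paper's Lemma: the iterated MH strategy is on average more likely than the joint MH strategy to accept its proposal, since both start from the numerically identical proposal and r_iter / r_joint = π(Ψ2|Ψ1)/π(Ψ2|Ψ1').) -/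
/-!
Integrating out `x'` turns the integrand into `(π(x,y)² / π₁(x)) · ∫ π₁(x')² / π(x',y) dx'`.
For fixed `y`, the Cauchy–Schwarz inequality in the form `(∫ f)(∫ g) ≤ (∫ f²/g)(∫ g²/f)`,
applied to `f = π(·,y)` and `g = π₁`, bounds the `y`-slice below by `π₂(y) · ∫ π₁ = π₂(y)`,
and `π₂` integrates to `1`.
-/

open MeasureTheory ENNReal

namespace ENNReal

theorem div_div_div_mul_mul_eq_sq_div_mul_sq_div {a b c d : ℝ≥0∞} (hc₀ : c ≠ 0) (hc : c ≠ ∞) :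
    a / b / (c / d) * a * d = a ^ 2 / b * (d ^ 2 / c) := by
  rw [div_eq_mul_inv _ (c / d), ENNReal.inv_div (Or.inr hc) (Or.inr hc₀)]
  simp only [div_eq_mul_inv]
  ring

end ENNReal

namespace MeasureTheory

variable {α : Type*} [MeasurableSpace α] {μ : Measure α} {f g : α → ℝ≥0∞}

theorem lintegral_ne_zero_of_ae_ne_zero [NeZero μ] (hf : AEMeasurable f μ)
    (h : ∀ᵐ a ∂μ, f a ≠ 0) : ∫⁻ a, f a ∂μ ≠ 0 := fun h₀ =>
  (((lintegral_eq_zero_iff' hf).1 h₀).and h).exists.elim fun _ ha => ha.2 ha.1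

theorem sq_lintegral_le_lintegral_sq_div_mul_lintegral (hf : AEMeasurable f μ)
    (hg : AEMeasurable g μ) (hg₀ : ∀ᵐ a ∂μ, g a ≠ 0) (hg_top : ∀ᵐ a ∂μ, g a ≠ ∞) :
    (∫⁻ a, f a ∂μ) ^ 2 ≤ (∫⁻ a, f a ^ 2 / g a ∂μ) * ∫⁻ a, g a ∂μ := by
  have hfg : ∀ᵐ a ∂μ, (f a ^ 2 / g a) ^ (2⁻¹ : ℝ) * g a ^ (2⁻¹ : ℝ) = f a := by
    filter_upwards [hg₀, hg_top] with a h₀ h_top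
    rw [← mul_rpow_of_nonneg _ _ (by norm_num), ENNReal.div_mul_cancel h₀ h_top]
    exact_mod_cast pow_rpow_inv_natCast two_ne_zero (f a)
  have holder := ENNReal.lintegral_mul_norm_pow_le (f := fun a => f a ^ 2 / g a)
    ((hf.pow_const 2).div hg) hg (p := 2⁻¹) (q := 2⁻¹) (by norm_num) (by norm_num) (by norm_num)
  rwa [lintegral_congr_ae hfg, ← mul_rpow_of_nonneg _ _ (by norm_num),
    le_rpow_inv_iff two_pos, rpow_two] at holder

theorem lintegral_mul_lintegral_le_lintegral_sq_div_mul_lintegral_sq_div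
    (hf : AEMeasurable f μ) (hg : AEMeasurable g μ)
    (hf₀ : ∀ᵐ a ∂μ, f a ≠ 0) (hg₀ : ∀ᵐ a ∂μ, g a ≠ 0)
    (hf_top : ∫⁻ a, f a ∂μ ≠ ∞) (hg_top : ∫⁻ a, g a ∂μ ≠ ∞) :
    (∫⁻ a, f a ∂μ) * ∫⁻ a, g a ∂μ ≤ (∫⁻ a, f a ^ 2 / g a ∂μ) * ∫⁻ a, g a ^ 2 / f a ∂μ := by
  set F := ∫⁻ a, f a ∂μ
  set G := ∫⁻ a, g a ∂μ
  rcases eq_or_ne (F * G) 0 with h₀ | h₀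
  · simp [h₀]
  rw [← ENNReal.mul_le_mul_iff_left h₀ (mul_ne_top hf_top hg_top)]
  calc F * G * (F * G) = F ^ 2 * G ^ 2 := by ring
    _ ≤ (∫⁻ a, f a ^ 2 / g a ∂μ) * G * ((∫⁻ a, g a ^ 2 / f a ∂μ) * F) :=
      mul_le_mul'
        (sq_lintegral_le_lintegral_sq_div_mul_lintegral hf hg hg₀
          ((ae_lt_top' hg hg_top).mono fun _ => ne_of_lt))
        (sq_lintegral_le_lintegral_sq_div_mul_lintegral hg hf hf₀
          ((ae_lt_top' hf hf_top).mono fun _ => ne_of_lt))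
    _ = _ := by ring

end MeasureTheory

/-- **The paper's Lemma (Section 4.1).** Let `π` be a strictly positive joint probability
density on `ℝ^m × ℝ^n`, with first marginal `π₁ x = ∫⁻ y, π x y` and conditional density
`π(y|x) = π x y / π₁ x`. If `(Ψ1, Ψ2) ~ π` and `Ψ1' ~ π₁` is drawn independently, then
`E[π(Ψ2|Ψ1) / π(Ψ2|Ψ1')] ≥ 1`, i.e.
`∫∫∫ [π(y|x) / π(y|x')] · π(x,y) · π₁(x') dx' dy dx ≥ 1`,
the integrals being taken in the extended nonnegative reals. -/
theorem expected_acceptance_ratio_ge_one {m n : ℕ}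
    (π : (Fin m → ℝ) → (Fin n → ℝ) → ℝ≥0∞)
    (hmeas : Measurable (Function.uncurry π))
    (hpos : ∀ x y, 0 < π x y)
    (hfin : ∀ x y, π x y < ∞)
    (hnorm : ∫⁻ x, ∫⁻ y, π x y = 1) :
    1 ≤ ∫⁻ x, ∫⁻ y, ∫⁻ x',
        ((π x y / ∫⁻ y', π x y') / (π x' y / ∫⁻ y', π x' y'))
          * π x y * (∫⁻ y', π x' y') := by
  set p₁ : (Fin m → ℝ) → ℝ≥0∞ := fun x => ∫⁻ y, π x y
  have hp₁ : Measurable p₁ := hmeas.lintegral_prod_right'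
  have hp₁₀ : ∀ x, p₁ x ≠ 0 := fun x =>
    lintegral_ne_zero_of_ae_ne_zero hmeas.of_uncurry_left.aemeasurable
      (ae_of_all _ fun y => (hpos x y).ne')
  have hp₂ : ∫⁻ y, ∫⁻ x, π x y = 1 :=
    (lintegral_lintegral_swap hmeas.aemeasurable).symm.trans hnorm
  have hp₂_top : ∀ᵐ y, ∫⁻ x, π x y ≠ ∞ :=
    (ae_lt_top hmeas.lintegral_prod_left' (hp₂ ▸ one_ne_top)).mono fun _ => ne_of_lt
  set A : (Fin m → ℝ) → (Fin n → ℝ) → ℝ≥0∞ := fun x y => π x y ^ 2 / p₁ x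
  set B : (Fin n → ℝ) → ℝ≥0∞ := fun y => ∫⁻ x', p₁ x' ^ 2 / π x' y
  have hA : Measurable (Function.uncurry A) := (hmeas.pow_const 2).div (hp₁.comp measurable_fst)
  have hB : Measurable B :=
    (((hp₁.comp measurable_fst).pow_const 2).div hmeas).lintegral_prod_left'
  calc 1 = ∫⁻ y, (∫⁻ x, π x y) * ∫⁻ x, p₁ x := by simp only [hnorm, mul_one, hp₂]
    _ ≤ ∫⁻ y, (∫⁻ x, A x y) * B y := by
        refine lintegral_mono_ae (hp₂_top.mono fun y hy => ?_)
        exact lintegral_mul_lintegral_le_lintegral_sq_div_mul_lintegral_sq_div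
          hmeas.of_uncurry_right.aemeasurable hp₁.aemeasurable
          (ae_of_all _ fun x => (hpos x y).ne') (ae_of_all _ hp₁₀) hy (hnorm ▸ one_ne_top)
    _ = ∫⁻ x, ∫⁻ y, A x y * B y := by
        simp only [← lintegral_mul_const _ hA.of_uncurry_right]
        exact (lintegral_lintegral_swap (hA.mul (hB.comp measurable_snd)).aemeasurable).symm
    _ = _ := by
        refine lintegral_congr fun x => lintegral_congr fun y => ?_
        refine (lintegral_const_mul (A x y)
          ((hp₁.pow_const 2).div hmeas.of_uncurry_right)).symm.trans ?_
        exact lintegral_congr fun x' => (ENNReal.div_div_div_mul_mul_eq_sq_div_mul_sq_div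
          (hpos x' y).ne' (hfin x' y).ne).symm
end

section
/- Let S₁, S₂, S₃ be standard Borel spaces and π a probability measure on S₁ × S₂ × S₃ with marginals π₁ on S₁, π₁₂ on S₁ × S₂, and π₁₃ on S₁ × S₃. Let κ : S₁ → measures on S₃ be a Markov kernel disintegrating π₁₃, i.e., π₁₃ = π₁ ⊗ κ. Define ν to be the law of (Ψ₁, Ψ₂, Ψ₃') where (Ψ₁, Ψ₂) ~ π₁₂ and, conditionally on (Ψ₁, Ψ₂) = (ψ₁, ψ₂), Ψ₃' ~ κ(ψ₁). Then: (i) the (S₁, S₃)-marginal of ν equals π₁₃; (ii) the (S₁, S₂)-marginal of ν equals π₁₂; and (iii) under ν, the second and third coordinates are conditionally independent given the first coordinate. (This is the paper's equation (5): after a reduced draw of μ from p(μ|Y,X,θ), the joint law of (X, θ, μ) is the target posterior marginal and X_L is conditionally independent of the new μ given (X, θ).) -/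
/-!
Disintegrate `π₁₂ = π₁ ⊗ₘ ρ`. Drawing `Ψ₃' ~ κ Ψ₁` after `(Ψ₁, Ψ₂) ~ π₁ ⊗ₘ ρ` is the same as
drawing `Ψ₁ ~ π₁` and then `Ψ₂ ~ ρ Ψ₁`, `Ψ₃' ~ κ Ψ₁` independently, so `ν = π₁ ⊗ₘ (ρ ×ₖ κ)`.
Both marginal identities are then marginals of the product kernel, and the conditional
distributions of the second and third coordinates given the first are `ρ` and `κ`, whose product
is the kernel of `ν` itself: this is conditional independence.
-/

open MeasureTheory ProbabilityTheory

namespace ProbabilityTheory.Kernel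

variable {α β γ : Type*} {mα : MeasurableSpace α} {mβ : MeasurableSpace β}
  {mγ : MeasurableSpace γ}

lemma compProd_prodMkRight (ρ : Kernel α β) [IsSFiniteKernel ρ] (κ : Kernel α γ)
    [IsSFiniteKernel κ] : ρ ⊗ₖ prodMkRight β κ = ρ ×ₖ κ := by
  ext a s hs
  rw [compProd_apply hs, prod_apply, Measure.prod_apply hs]
  rfl

end ProbabilityTheory.Kernel

namespace MeasureTheory.Measure

variable {α β γ : Type*} {mα : MeasurableSpace α} {mβ : MeasurableSpace β}
  {mγ : MeasurableSpace γ}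

lemma bind_compProd_map_prodMk (μ : Measure α) [SFinite μ] (ρ : Kernel α β) [IsSFiniteKernel ρ]
    (κ : Kernel α γ) [IsSFiniteKernel κ] :
    (μ ⊗ₘ ρ).bind (fun q => (κ q.1).map (fun z => (q.1, q.2, z))) = μ ⊗ₘ (ρ ×ₖ κ) := by
  have hkernel : (fun q : α × β => (κ q.1).map (fun z => (q.1, q.2, z)))
      = ⇑((Kernel.id ×ₖ Kernel.prodMkRight β κ).map MeasurableEquiv.prodAssoc) := by
    ext1 q
    rw [Kernel.map_apply _ (MeasurableEquiv.measurable _), Kernel.prod_apply, Kernel.id_apply,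
      Kernel.prodMkRight_apply, Measure.dirac_prod, Measure.map_map (MeasurableEquiv.measurable _)
      measurable_prodMk_left]
    rfl
  rw [hkernel, ← Kernel.compProd_prodMkRight ρ κ, ← compProd_assoc', ← Measure.map_comp _ _
    (MeasurableEquiv.measurable _), ← compProd_eq_comp_prod]

lemma map_fst_fst_snd_compProd_prod (μ : Measure α) [SFinite μ]
    (ρ : Kernel α β) [IsSFiniteKernel ρ] (κ : Kernel α γ) [IsMarkovKernel κ] :
    (μ ⊗ₘ (ρ ×ₖ κ)).map (fun p => (p.1, p.2.1)) = μ ⊗ₘ ρ := by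
  change (μ ⊗ₘ _).map (Prod.map id Prod.fst) = _
  rw [← compProd_map measurable_fst, ← Kernel.fst_eq, Kernel.fst_prod]

lemma map_fst_snd_snd_compProd_prod (μ : Measure α) [SFinite μ]
    (ρ : Kernel α β) [IsMarkovKernel ρ] (κ : Kernel α γ) [IsSFiniteKernel κ] :
    (μ ⊗ₘ (ρ ×ₖ κ)).map (fun p => (p.1, p.2.2)) = μ ⊗ₘ κ := by
  change (μ ⊗ₘ _).map (Prod.map id Prod.snd) = _
  rw [← compProd_map measurable_snd, ← Kernel.snd_eq, Kernel.snd_prod]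

end MeasureTheory.Measure

namespace ProbabilityTheory

variable {α β γ Ω : Type*} {mα : MeasurableSpace α} {mβ : MeasurableSpace β}
  {mγ : MeasurableSpace γ} {mΩ : MeasurableSpace Ω}

lemma condDistrib_comp_snd_compProd [StandardBorelSpace β] [Nonempty β] (μ : Measure α)
    [IsFiniteMeasure μ] (η : Kernel α Ω) [IsMarkovKernel η] {f : Ω → β} (hf : Measurable f) :
    condDistrib (fun p => f p.2) (fun p => p.1) (μ ⊗ₘ η) =ᵐ[μ] η.map f := by
  have hfst : (μ ⊗ₘ η).map (fun p => p.1) = μ := Measure.fst_compProd μ η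
  have h := condDistrib_ae_eq_of_measure_eq_compProd (μ := μ ⊗ₘ η) (fun p => p.1)
    (Y := fun p => f p.2) (by fun_prop) (κ := η.map f)
    (by rw [hfst, Measure.compProd_map hf]; rfl)
  rwa [hfst] at h

theorem condIndepFun_compProd_prod [StandardBorelSpace α] [StandardBorelSpace β] [Nonempty β]
    [StandardBorelSpace γ] [Nonempty γ] (μ : Measure α) [IsFiniteMeasure μ]
    (ρ : Kernel α β) [IsMarkovKernel ρ] (κ : Kernel α γ) [IsMarkovKernel κ] :
    (fun p : α × β × γ => p.2.1) ⟂ᵢ[fun p => p.1, measurable_fst; μ ⊗ₘ (ρ ×ₖ κ)]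
      (fun p => p.2.2) := by
  have hfst : (μ ⊗ₘ (ρ ×ₖ κ)).map Prod.fst = μ := Measure.fst_compProd μ (ρ ×ₖ κ)
  have hρ : condDistrib (fun p => p.2.1) (fun p => p.1) (μ ⊗ₘ (ρ ×ₖ κ)) =ᵐ[μ] ρ := by
    simpa only [← Kernel.fst_eq, Kernel.fst_prod] using
      condDistrib_comp_snd_compProd μ (ρ ×ₖ κ) measurable_fst
  have hκ : condDistrib (fun p => p.2.2) (fun p => p.1) (μ ⊗ₘ (ρ ×ₖ κ)) =ᵐ[μ] κ := by
    simpa only [← Kernel.snd_eq, Kernel.snd_prod] using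
      condDistrib_comp_snd_compProd μ (ρ ×ₖ κ) measurable_snd
  rw [condIndepFun_iff_map_prod_eq_prod_condDistrib_prod_condDistrib (by fun_prop) (by fun_prop)
    measurable_fst, Measure.map_id', hfst, ← Measure.compProd_eq_comp_prod]
  refine Measure.compProd_congr ?_
  filter_upwards [hρ, hκ] with a hρa hκa
  rw [Kernel.prod_apply, Kernel.prod_apply, hρa, hκa]

end ProbabilityTheory

theorem reduced_conditional_draw_marginals_and_cond_indep_general
    {S₁ S₂ S₃ : Type*}
    [MeasurableSpace S₁] [StandardBorelSpace S₁]
    [MeasurableSpace S₂] [StandardBorelSpace S₂] [Nonempty S₂]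
    [MeasurableSpace S₃] [StandardBorelSpace S₃] [Nonempty S₃]
    (π : Measure (S₁ × S₂ × S₃)) [IsProbabilityMeasure π]
    (κ : Kernel S₁ S₃) [IsMarkovKernel κ]
    (hκ : π.map (fun p => (p.1, p.2.2)) = (π.map (fun p => p.1)) ⊗ₘ κ)
    (ν : Measure (S₁ × S₂ × S₃)) [IsProbabilityMeasure ν]
    (hν : ν = (π.map (fun p => (p.1, p.2.1))).bind
        (fun q => (κ q.1).map (fun z => (q.1, q.2, z)))) :
    ν.map (fun p => (p.1, p.2.2)) = π.map (fun p => (p.1, p.2.2)) ∧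
    ν.map (fun p => (p.1, p.2.1)) = π.map (fun p => (p.1, p.2.1)) ∧
    CondIndepFun (MeasurableSpace.comap (fun p : S₁ × S₂ × S₃ => p.1) inferInstance)
      ((measurable_fst : Measurable (fun p : S₁ × S₂ × S₃ => p.1)).comap_le)
      (fun p : S₁ × S₂ × S₃ => p.2.1) (fun p : S₁ × S₂ × S₃ => p.2.2) ν := by
  obtain ⟨ρ, _, hρ⟩ : ∃ ρ : Kernel S₁ S₂, IsMarkovKernel ρ ∧
      π.map (fun p => (p.1, p.2.1)) = π.map (fun p => p.1) ⊗ₘ ρ :=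
    let π₁₂ := π.map (fun p => (p.1, p.2.1))
    ⟨π₁₂.condKernel, inferInstance, by
      conv_rhs => rw [← Measure.fst_map_prodMk (Y := fun p : S₁ × S₂ × S₃ => p.2.1) (by fun_prop)]
      exact (π₁₂.disintegrate π₁₂.condKernel).symm⟩
  obtain rfl : ν = π.map (fun p => p.1) ⊗ₘ (ρ ×ₖ κ) := by
    rw [hν, hρ, Measure.bind_compProd_map_prodMk]
  exact ⟨by rw [Measure.map_fst_snd_snd_compProd_prod, hκ],
    by rw [Measure.map_fst_fst_snd_compProd_prod, hρ], condIndepFun_compProd_prod _ _ _⟩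

/-- **Equation (5) of the paper.** Let `π` be a probability measure on `S₁ × S₂ × S₃`
(standard Borel spaces), and `κ` a Markov kernel disintegrating the `(S₁,S₃)`-marginal of `π`
over the first coordinate, i.e. `π₁₃ = π₁ ⊗ₘ κ`. Let `ν` be the law of `(Ψ₁, Ψ₂, Ψ₃')` where
`(Ψ₁, Ψ₂) ~ π₁₂` and, conditionally on `(Ψ₁, Ψ₂) = (ψ₁, ψ₂)`, `Ψ₃' ~ κ ψ₁`. Then:
(i) the `(S₁,S₃)`-marginal of `ν` equals `π₁₃`;
(ii) the `(S₁,S₂)`-marginal of `ν` equals `π₁₂`; and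
(iii) under `ν`, the second and third coordinates are conditionally independent given the
first coordinate. -/
theorem reduced_conditional_draw_marginals_and_cond_indep
    {S₁ S₂ S₃ : Type*}
    [MeasurableSpace S₁] [StandardBorelSpace S₁] [Nonempty S₁]
    [MeasurableSpace S₂] [StandardBorelSpace S₂] [Nonempty S₂]
    [MeasurableSpace S₃] [StandardBorelSpace S₃] [Nonempty S₃]
    (π : Measure (S₁ × S₂ × S₃)) [IsProbabilityMeasure π]
    (κ : Kernel S₁ S₃) [IsMarkovKernel κ]
    (hκ : π.map (fun p => (p.1, p.2.2)) = (π.map (fun p => p.1)) ⊗ₘ κ)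
    (ν : Measure (S₁ × S₂ × S₃)) [IsProbabilityMeasure ν]
    (hν : ν = (π.map (fun p => (p.1, p.2.1))).bind
        (fun q => (κ q.1).map (fun z => (q.1, q.2, z)))) :
    ν.map (fun p => (p.1, p.2.2)) = π.map (fun p => (p.1, p.2.2)) ∧
    ν.map (fun p => (p.1, p.2.1)) = π.map (fun p => (p.1, p.2.1)) ∧
    CondIndepFun (MeasurableSpace.comap (fun p : S₁ × S₂ × S₃ => p.1) inferInstance)
      ((measurable_fst : Measurable (fun p : S₁ × S₂ × S₃ => p.1)).comap_le)
      (fun p : S₁ × S₂ × S₃ => p.2.1) (fun p : S₁ × S₂ × S₃ => p.2.2) ν :=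
  reduced_conditional_draw_marginals_and_cond_indep_general π κ hκ ν hν
end

section
/- Let S₁, S₂, S₃ be standard Borel spaces and π a probability measure on S₁ × S₂ × S₃, with first-coordinate marginal π₁, third-coordinate marginal π₃, (S₁,S₃)-marginal π₁₃. Let κ₃ : S₁ → measures on S₃ be a Markov kernel with π₁₃ = π₁ ⊗ κ₃ (a conditional distribution of the third coordinate given the first, under the marginal with the second coordinate integrated out), and let κ₁₂ : S₃ → measures on S₁ × S₂ be a Markov kernel that is a conditional distribution of the first two coordinates given the third under π. Define the transition kernel K on S₁ × S₂ × S₃ by: from state (ψ₁, ψ₂, ψ₃), draw ψ₃' ~ κ₃(ψ₁), then (ψ₁', ψ₂') ~ κ₁₂(ψ₃'), and output (ψ₁', ψ₂', ψ₃'). Then π is a stationary distribution of K, i.e., π.bind K = π. -/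
open MeasureTheory ProbabilityTheory
open scoped ProbabilityTheory

/-- **Propriety of the two-step PCG structure (Sampler 3).** Let `π` be a probability measure
on `S₁ × S₂ × S₃` (standard Borel spaces). Let `κ₃` be a Markov kernel with
`π₁₃ = π₁ ⊗ₘ κ₃` (a conditional distribution of the third coordinate given the first, under
the marginal with the second coordinate integrated out), and let `κ₁₂` be a Markov kernel
that is a conditional distribution of the first two coordinates given the third under `π`.
The transition kernel `K`: from `(ψ₁, ψ₂, ψ₃)`, draw `ψ₃' ~ κ₃ ψ₁`, then
`(ψ₁', ψ₂') ~ κ₁₂ ψ₃'`, and output `(ψ₁', ψ₂', ψ₃')`. Then `π` is stationary for `K`: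
`π.bind K = π`. -/
theorem pcg_reduced_then_full_conditional_stationary
    {S₁ S₂ S₃ : Type*}
    [MeasurableSpace S₁] [StandardBorelSpace S₁] [Nonempty S₁]
    [MeasurableSpace S₂] [StandardBorelSpace S₂] [Nonempty S₂]
    [MeasurableSpace S₃] [StandardBorelSpace S₃] [Nonempty S₃]
    (π : Measure (S₁ × S₂ × S₃)) [IsProbabilityMeasure π]
    (κ₃ : Kernel S₁ S₃) [IsMarkovKernel κ₃]
    (hκ₃ : π.map (fun p => (p.1, p.2.2)) = (π.map (fun p => p.1)) ⊗ₘ κ₃)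
    (κ₁₂ : Kernel S₃ (S₁ × S₂)) [IsMarkovKernel κ₁₂]
    (hκ₁₂ : π.map (fun p => (p.2.2, (p.1, p.2.1))) = (π.map (fun p => p.2.2)) ⊗ₘ κ₁₂) :
    π.bind (fun p => (κ₃ p.1).bind
        (fun ψ₃' => (κ₁₂ ψ₃').map (fun q => (q.1, q.2, ψ₃')))) = π := by
  -- the inner map is a measurable family of measures
  have hinner : Measurable fun c : S₃ =>
      (κ₁₂ c).map (fun q : S₁ × S₂ => (q.1, q.2, c)) := by
    refine Measure.measurable_of_measurable_coe _ (fun t ht => ?_)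
    have key : ∀ c : S₃, (κ₁₂ c).map (fun q : S₁ × S₂ => (q.1, q.2, c)) t
        = κ₁₂ c {q : S₁ × S₂ | (q.1, q.2, c) ∈ t} := fun c =>
      Measure.map_apply (measurable_fst.prodMk (measurable_snd.prodMk measurable_const)) ht
    simp_rw [key]
    have ht' : MeasurableSet {z : S₃ × S₁ × S₂ | (z.2.1, z.2.2, z.1) ∈ t} :=
      (by fun_prop : Measurable fun z : S₃ × S₁ × S₂ => (z.2.1, z.2.2, z.1)) ht
    exact Kernel.measurable_kernel_prodMk_left ht'
  have hK : Measurable fun p : S₁ × S₂ × S₃ => (κ₃ p.1).bind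
      (fun ψ₃' => (κ₁₂ ψ₃').map (fun q : S₁ × S₂ => (q.1, q.2, ψ₃'))) :=
    (Measure.measurable_bind' hinner).comp (κ₃.measurable.comp measurable_fst)
  ext s hs
  have hs' : MeasurableSet {z : S₃ × S₁ × S₂ | (z.2.1, z.2.2, z.1) ∈ s} :=
    (by fun_prop : Measurable fun z : S₃ × S₁ × S₂ => (z.2.1, z.2.2, z.1)) hs
  have hg : Measurable fun c : S₃ => κ₁₂ c {q : S₁ × S₂ | (q.1, q.2, c) ∈ s} :=
    Kernel.measurable_kernel_prodMk_left hs'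
  have h1 : ∀ p : S₁ × S₂ × S₃,
      ((κ₃ p.1).bind fun ψ₃' => (κ₁₂ ψ₃').map fun q : S₁ × S₂ => (q.1, q.2, ψ₃')) s
        = ∫⁻ c, κ₁₂ c {q : S₁ × S₂ | (q.1, q.2, c) ∈ s} ∂(κ₃ p.1) := by
    intro p
    rw [Measure.bind_apply hs hinner.aemeasurable]
    refine lintegral_congr fun c => ?_
    rw [Measure.map_apply (measurable_fst.prodMk (measurable_snd.prodMk measurable_const)) hs]
    rfl
  have h3 : (π.map fun p : S₁ × S₂ × S₃ => (p.1, p.2.2)).map Prod.snd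
      = π.map fun p : S₁ × S₂ × S₃ => p.2.2 := by
    rw [Measure.map_map measurable_snd (by fun_prop)]
    rfl
  rw [Measure.bind_apply hs hK.aemeasurable]
  calc ∫⁻ p, ((κ₃ p.1).bind fun ψ₃' =>
          (κ₁₂ ψ₃').map fun q : S₁ × S₂ => (q.1, q.2, ψ₃')) s ∂π
      = ∫⁻ p, ∫⁻ c, κ₁₂ c {q : S₁ × S₂ | (q.1, q.2, c) ∈ s} ∂(κ₃ p.1) ∂π :=
        lintegral_congr h1
    _ = ∫⁻ a, ∫⁻ c, κ₁₂ c {q : S₁ × S₂ | (q.1, q.2, c) ∈ s} ∂(κ₃ a)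
          ∂(π.map fun p : S₁ × S₂ × S₃ => p.1) :=
        (lintegral_map (hg.lintegral_kernel (κ := κ₃)) measurable_fst).symm
    _ = ∫⁻ z : S₁ × S₃, κ₁₂ z.2 {q : S₁ × S₂ | (q.1, q.2, z.2) ∈ s}
          ∂((π.map fun p : S₁ × S₂ × S₃ => p.1) ⊗ₘ κ₃) :=
        (Measure.lintegral_compProd (hg.comp measurable_snd)).symm
    _ = ∫⁻ z : S₁ × S₃, κ₁₂ z.2 {q : S₁ × S₂ | (q.1, q.2, z.2) ∈ s}
          ∂(π.map fun p : S₁ × S₂ × S₃ => (p.1, p.2.2)) := by rw [hκ₃]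
    _ = ∫⁻ c, κ₁₂ c {q : S₁ × S₂ | (q.1, q.2, c) ∈ s}
          ∂((π.map fun p : S₁ × S₂ × S₃ => (p.1, p.2.2)).map Prod.snd) :=
        (lintegral_map hg measurable_snd).symm
    _ = ∫⁻ c, κ₁₂ c {q : S₁ × S₂ | (q.1, q.2, c) ∈ s}
          ∂(π.map fun p : S₁ × S₂ × S₃ => p.2.2) := by rw [h3]
    _ = ((π.map fun p : S₁ × S₂ × S₃ => p.2.2) ⊗ₘ κ₁₂)
          {z : S₃ × S₁ × S₂ | (z.2.1, z.2.2, z.1) ∈ s} :=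
        (Measure.compProd_apply hs').symm
    _ = (π.map fun p : S₁ × S₂ × S₃ => (p.2.2, (p.1, p.2.1)))
          {z : S₃ × S₁ × S₂ | (z.2.1, z.2.2, z.1) ∈ s} := by rw [hκ₁₂]
    _ = π s := by
        rw [Measure.map_apply (by fun_prop) hs']
        congr 1
end

section
/- Let S₁, S₂, S₃ be standard Borel spaces and π a probability measure on S₁ × S₂ × S₃ with (S₁,S₂)-marginal π₁₂. Let κ : S₁ × S₂ → measures on S₂ be a Markov kernel such that the update (ψ₁, ψ₂) ↦ (ψ₁, ψ₂' ~ κ(ψ₁, ψ₂)) leaves π₁₂ invariant, i.e., π₁₂.bind(λ(ψ₁,ψ₂). (κ(ψ₁,ψ₂)).map(λψ₂'. (ψ₁,ψ₂'))) = π₁₂. Let κ₃ : S₁ × S₂ → measures on S₃ be a Markov kernel with π = π₁₂ ⊗ κ₃. Define the transition kernel K by: from (ψ₁, ψ₂, ψ₃), draw ψ₂' ~ κ(ψ₁, ψ₂), then ψ₃' ~ κ₃(ψ₁, ψ₂'), and output (ψ₁, ψ₂', ψ₃'). Then π is stationary for K. -/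
open MeasureTheory ProbabilityTheory
open scoped ProbabilityTheory

section Aux

variable {α β γ : Type*} [MeasurableSpace α] [MeasurableSpace β] [MeasurableSpace γ]

lemma measure_bind_map (μ : Measure α) {f : α → β} (hf : Measurable f)
    {g : β → Measure γ} (hg : Measurable g) :
    (μ.map f).bind g = μ.bind (fun a => g (f a)) := by
  have : μ.map f = μ.bind (fun a => Measure.dirac (f a)) := (Measure.bind_dirac_eq_map μ hf).symm
  have hd : Measurable fun a => Measure.dirac (f a) := Measure.measurable_dirac.comp hf
  rw [this, Measure.bind_bind hd.aemeasurable hg.aemeasurable]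
  simp_rw [Measure.dirac_bind hg]

lemma measure_map_bind (μ : Measure α) {f : α → Measure β} (hf : Measurable f)
    {g : β → γ} (hg : Measurable g) :
    (μ.bind f).map g = μ.bind (fun a => (f a).map g) := by
  have h1 : (μ.bind f).map g = (μ.bind f).bind (fun b => Measure.dirac (g b)) :=
    (Measure.bind_dirac_eq_map _ hg).symm
  have hd : Measurable fun b => Measure.dirac (g b) := Measure.measurable_dirac.comp hg
  rw [h1, Measure.bind_bind hf.aemeasurable hd.aemeasurable]
  congr 1
  ext1 a
  exact Measure.bind_dirac_eq_map _ hg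

lemma compProd_eq_bind (μ : Measure α) [SFinite μ] (κ : Kernel α β) [IsSFiniteKernel κ] :
    μ ⊗ₘ κ = μ.bind (fun a => (κ a).map (Prod.mk a)) := by
  have hmeas : Measurable (fun a => (κ a).map (Prod.mk a)) := by
    have : (fun a => (κ a).map (Prod.mk a)) = fun a => (Kernel.id ×ₖ κ) a := by
      ext1 a
      rw [Kernel.prod_apply, Kernel.id_apply, Measure.dirac_prod]
    rw [this]
    exact (Kernel.id ×ₖ κ).measurable
  ext s hs
  rw [Measure.compProd_apply hs, Measure.bind_apply hs hmeas.aemeasurable]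
  refine lintegral_congr fun a => ?_
  rw [Measure.map_apply measurable_prodMk_left hs]

end Aux

/-- **The paper's Section 3.1 prescription for reducing the conditioning in an MH step.**
Let `π` be a probability measure on `S₁ × S₂ × S₃` (standard Borel spaces) with
`(S₁,S₂)`-marginal `π₁₂`. Let `κ` be a Markov kernel from `S₁ × S₂` to `S₂` such that the
update `(ψ₁, ψ₂) ↦ (ψ₁, ψ₂' ~ κ (ψ₁, ψ₂))` leaves `π₁₂` invariant (e.g. a reduced MH step
targeting `p(ψ₂|ψ₁)`), and let `κ₃` be a Markov kernel from `S₁ × S₂` to `S₃` that is a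
conditional distribution of the third coordinate given the first two under `π`. The
transition kernel `K`: from `(ψ₁, ψ₂, ψ₃)`, draw `ψ₂' ~ κ (ψ₁, ψ₂)`, then
`ψ₃' ~ κ₃ (ψ₁, ψ₂')`, and output `(ψ₁, ψ₂', ψ₃')`. Then `π` is stationary for `K`. -/
theorem reduced_mh_then_conditional_draw_stationary
    {S₁ S₂ S₃ : Type*}
    [MeasurableSpace S₁] [StandardBorelSpace S₁] [Nonempty S₁]
    [MeasurableSpace S₂] [StandardBorelSpace S₂] [Nonempty S₂]
    [MeasurableSpace S₃] [StandardBorelSpace S₃] [Nonempty S₃]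
    (π : Measure (S₁ × S₂ × S₃)) [IsProbabilityMeasure π]
    (κ : Kernel (S₁ × S₂) S₂) [IsMarkovKernel κ]
    (hκ : (π.map (fun p => (p.1, p.2.1))).bind
        (fun q => (κ q).map (fun ψ₂' => (q.1, ψ₂'))) = π.map (fun p => (p.1, p.2.1)))
    (κ₃ : Kernel (S₁ × S₂) S₃) [IsMarkovKernel κ₃]
    (hκ₃ : π.map (fun p => ((p.1, p.2.1), p.2.2)) =
        (π.map (fun p => (p.1, p.2.1))) ⊗ₘ κ₃) :
    π.bind (fun p => (κ (p.1, p.2.1)).bind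
        (fun ψ₂' => (κ₃ (p.1, ψ₂')).map (fun ψ₃' => (p.1, ψ₂', ψ₃')))) = π := by
  have he12 : Measurable (fun p : S₁ × S₂ × S₃ => (p.1, p.2.1)) := by fun_prop
  set π₁₂ : Measure (S₁ × S₂) := π.map (fun p => (p.1, p.2.1)) with hπ₁₂def
  have he : Measurable (fun x : (S₁ × S₂) × S₃ => (x.1.1, x.1.2, x.2)) := by fun_prop
  -- H : second-stage function on S₁ × S₂
  have hκ₃mk : Measurable (fun r : S₁ × S₂ => (κ₃ r).map (Prod.mk r)) := by
    have h2 : (fun r : S₁ × S₂ => (κ₃ r).map (Prod.mk r))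
        = fun r => (Kernel.id ×ₖ κ₃) r := by
      ext1 r
      rw [Kernel.prod_apply, Kernel.id_apply, Measure.dirac_prod]
    rw [h2]
    exact (Kernel.id ×ₖ κ₃).measurable
  have hHmeas : Measurable (fun r : S₁ × S₂ => (κ₃ r).map (fun ψ₃' => (r.1, r.2, ψ₃'))) := by
    have h1 : (fun r : S₁ × S₂ => (κ₃ r).map (fun ψ₃' => (r.1, r.2, ψ₃')))
        = fun r => ((κ₃ r).map (Prod.mk r)).map (fun x : (S₁ × S₂) × S₃ => (x.1.1, x.1.2, x.2)) := by
      ext1 r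
      rw [Measure.map_map he measurable_prodMk_left]
      rfl
    rw [h1]
    exact (Measure.measurable_map _ he).comp hκ₃mk
  have hκmk : Measurable (fun q : S₁ × S₂ => (κ q).map (Prod.mk q)) := by
    have h2 : (fun q : S₁ × S₂ => (κ q).map (Prod.mk q))
        = fun q => (Kernel.id ×ₖ κ) q := by
      ext1 q
      rw [Kernel.prod_apply, Kernel.id_apply, Measure.dirac_prod]
    rw [h2]
    exact (Kernel.id ×ₖ κ).measurable
  have hpr : Measurable (fun x : (S₁ × S₂) × S₂ => (x.1.1, x.2)) := by fun_prop
  have hGmeas : Measurable (fun q : S₁ × S₂ => (κ q).map (fun ψ₂' => (q.1, ψ₂'))) := by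
    have h1 : (fun q : S₁ × S₂ => (κ q).map (fun ψ₂' => (q.1, ψ₂')))
        = fun q => ((κ q).map (Prod.mk q)).map (fun x : (S₁ × S₂) × S₂ => (x.1.1, x.2)) := by
      ext1 q
      rw [Measure.map_map hpr measurable_prodMk_left]
      rfl
    rw [h1]
    exact (Measure.measurable_map _ hpr).comp hκmk
  -- pointwise rewrite of the inner bind
  have hpoint : (fun q : S₁ × S₂ => (κ q).bind
        (fun ψ₂' => (κ₃ (q.1, ψ₂')).map (fun ψ₃' => (q.1, ψ₂', ψ₃'))))
      = fun q => ((κ q).map (fun ψ₂' => (q.1, ψ₂'))).bind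
        (fun r : S₁ × S₂ => (κ₃ r).map (fun ψ₃' => (r.1, r.2, ψ₃'))) := by
    ext1 q
    have hmk : Measurable (fun ψ₂' : S₂ => (q.1, ψ₂')) := by fun_prop
    rw [measure_bind_map _ hmk hHmeas]
  have hGbig : Measurable (fun q : S₁ × S₂ => (κ q).bind
        (fun ψ₂' => (κ₃ (q.1, ψ₂')).map (fun ψ₃' => (q.1, ψ₂', ψ₃')))) := by
    rw [hpoint]
    exact (Measure.measurable_bind' hHmeas).comp hGmeas
  -- Step A: rewrite the LHS as a bind over π₁₂
  have stepA : π.bind (fun p => (κ (p.1, p.2.1)).bind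
        (fun ψ₂' => (κ₃ (p.1, ψ₂')).map (fun ψ₃' => (p.1, ψ₂', ψ₃'))))
      = π₁₂.bind (fun q => (κ q).bind
        (fun ψ₂' => (κ₃ (q.1, ψ₂')).map (fun ψ₃' => (q.1, ψ₂', ψ₃')))) := by
    rw [hπ₁₂def, measure_bind_map π he12 hGbig]
  -- Step B: associativity + invariance
  have stepB : π₁₂.bind (fun q => (κ q).bind
        (fun ψ₂' => (κ₃ (q.1, ψ₂')).map (fun ψ₃' => (q.1, ψ₂', ψ₃'))))
      = π₁₂.bind (fun r => (κ₃ r).map (fun ψ₃' => (r.1, r.2, ψ₃'))) := by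
    rw [hpoint, ← Measure.bind_bind hGmeas.aemeasurable hHmeas.aemeasurable, hπ₁₂def, hκ]
  -- Step C: identify the result with π using hκ₃
  have hSF : SFinite π₁₂ := by rw [hπ₁₂def]; infer_instance
  have stepC : π₁₂.bind (fun r => (κ₃ r).map (fun ψ₃' => (r.1, r.2, ψ₃'))) = π := by
    have h1 : (fun r : S₁ × S₂ => (κ₃ r).map (fun ψ₃' => (r.1, r.2, ψ₃')))
        = fun r => ((κ₃ r).map (Prod.mk r)).map (fun x : (S₁ × S₂) × S₃ => (x.1.1, x.1.2, x.2)) := by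
      ext1 r
      rw [Measure.map_map he measurable_prodMk_left]
      rfl
    have hm : Measurable (fun p : S₁ × S₂ × S₃ => ((p.1, p.2.1), p.2.2)) := by fun_prop
    rw [h1, ← measure_map_bind _ hκ₃mk he, ← compProd_eq_bind π₁₂ κ₃, hπ₁₂def, ← hκ₃,
      Measure.map_map he hm]
    have : ((fun x : (S₁ × S₂) × S₃ => (x.1.1, x.1.2, x.2))
        ∘ (fun p : S₁ × S₂ × S₃ => ((p.1, p.2.1), p.2.2))) = id := by
      ext p <;> rfl
    rw [this, Measure.map_id]
  rw [stepA, stepB, stepC]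
end

section
/- Let S₁, S₂, S₃ be standard Borel spaces and π a probability measure on S₁ × S₂ × S₃ with (S₁,S₂)-marginal π₁₂ and (S₁,S₃)-marginal π₁₃. Let κ₃ : S₁ × S₂ → measures on S₃ satisfy π = π₁₂ ⊗ κ₃ (conditional of the third coordinate given the first two); let M : S₁ × S₃ → measures on S₁ be a Markov kernel such that the update (ψ₁, ψ₃) ↦ (ψ₁' ~ M(ψ₁, ψ₃), ψ₃) leaves π₁₃ invariant, i.e., π₁₃.bind(λ(ψ₁,ψ₃). (M(ψ₁,ψ₃)).map(λψ₁'. (ψ₁',ψ₃))) = π₁₃; and let κ₂ : S₁ × S₃ → measures on S₂ be a conditional distribution of the second coordinate given the first and third under π. Define the transition kernel K by: from (ψ₁, ψ₂, ψ₃), draw ψ₃' ~ κ₃(ψ₁, ψ₂), then ψ₁' ~ M(ψ₁, ψ₃'), then ψ₂' ~ κ₂(ψ₁', ψ₃'), and output (ψ₁', ψ₂', ψ₃'). Then π is stationary for K. -/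
open MeasureTheory ProbabilityTheory
open scoped ProbabilityTheory

namespace SamplerAux

variable {α β γ : Type*} [MeasurableSpace α] [MeasurableSpace β] [MeasurableSpace γ]

lemma bind_map' (μ : Measure α) {f : α → β} (hf : Measurable f) {g : β → Measure γ}
    (hg : Measurable g) : (μ.map f).bind g = μ.bind (fun a => g (f a)) := by
  ext s hs
  rw [Measure.bind_apply hs hg.aemeasurable,
    Measure.bind_apply hs (show Measurable fun a => g (f a) from hg.comp hf).aemeasurable]
  exact MeasureTheory.lintegral_map
    (show Measurable fun b => g b s from (Measure.measurable_coe hs).comp hg) hf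

lemma map_bind' (μ : Measure α) {f : α → Measure β} (hf : Measurable f) {g : β → γ}
    (hg : Measurable g) : (μ.bind f).map g = μ.bind (fun a => (f a).map g) := by
  rw [← Measure.bind_dirac_eq_map _ hg,
    Measure.bind_bind hf.aemeasurable
      (show Measurable fun x => Measure.dirac (g x) from Measure.measurable_dirac.comp hg).aemeasurable]
  exact congrArg _ (funext fun a => Measure.bind_dirac_eq_map (f a) hg)

lemma measurable_map_prodMk (κ : Kernel α β) [IsSFiniteKernel κ] :
    Measurable (fun a => (κ a).map (Prod.mk a)) := by
  have h := (Kernel.id ×ₖ κ).measurable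
  have heq : (fun a => (κ a).map (Prod.mk a)) = fun a => (Kernel.id ×ₖ κ) a := by
    funext a
    rw [Kernel.prod_apply, Kernel.id_apply, Measure.dirac_prod]
  rw [heq]; exact h

lemma compProd_eq_bind' (μ : Measure α) [SFinite μ] (κ : Kernel α β) [IsSFiniteKernel κ] :
    μ ⊗ₘ κ = μ.bind (fun a => (κ a).map (Prod.mk a)) := by
  ext s hs
  rw [Measure.compProd_apply hs, Measure.bind_apply hs (measurable_map_prodMk κ).aemeasurable]
  exact lintegral_congr fun a => (Measure.map_apply measurable_prodMk_left hs).symm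

lemma map_compProd_bind (μ : Measure α) [SFinite μ] (κ : Kernel α β) [IsSFiniteKernel κ]
    {g : α × β → γ} (hg : Measurable g) :
    (μ ⊗ₘ κ).map g = μ.bind (fun a => (κ a).map (fun b => g (a, b))) := by
  rw [compProd_eq_bind', map_bind' _ (measurable_map_prodMk κ) hg]
  refine congrArg _ (funext fun a => ?_)
  rw [Measure.map_map hg measurable_prodMk_left]
  rfl

end SamplerAux

/-- **Propriety of Sampler Fragment 6 with the complete conditional update of ψ₃
(Appendix A of the paper).** Let `π` be a probability measure on `S₁ × S₂ × S₃` (standard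
Borel spaces), with `(S₁,S₂)`-marginal `π₁₂` and `(S₁,S₃)`-marginal `π₁₃`. Let `κ₃` satisfy
`π = π₁₂ ⊗ₘ κ₃` (conditional of the third coordinate given the first two); let `M` be a
Markov kernel such that the update `(ψ₁, ψ₃) ↦ (ψ₁' ~ M (ψ₁, ψ₃), ψ₃)` leaves `π₁₃`
invariant (e.g. a reduced MH step targeting `p(ψ₁|ψ₃)`); and let `κ₂` be a conditional
distribution of the second coordinate given the first and third under `π`. The transition
kernel `K`: from `(ψ₁, ψ₂, ψ₃)`, draw `ψ₃' ~ κ₃ (ψ₁, ψ₂)`, then `ψ₁' ~ M (ψ₁, ψ₃')`, then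
`ψ₂' ~ κ₂ (ψ₁', ψ₃')`, and output `(ψ₁', ψ₂', ψ₃')`. Then `π` is stationary for `K`. -/
theorem reduced_mh_followed_by_full_conditionals_stationary
    {S₁ S₂ S₃ : Type*}
    [MeasurableSpace S₁] [StandardBorelSpace S₁] [Nonempty S₁]
    [MeasurableSpace S₂] [StandardBorelSpace S₂] [Nonempty S₂]
    [MeasurableSpace S₃] [StandardBorelSpace S₃] [Nonempty S₃]
    (π : Measure (S₁ × S₂ × S₃)) [IsProbabilityMeasure π]
    (κ₃ : Kernel (S₁ × S₂) S₃) [IsMarkovKernel κ₃]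
    (hκ₃ : π.map (fun p => ((p.1, p.2.1), p.2.2)) =
        (π.map (fun p => (p.1, p.2.1))) ⊗ₘ κ₃)
    (M : Kernel (S₁ × S₃) S₁) [IsMarkovKernel M]
    (hM : (π.map (fun p => (p.1, p.2.2))).bind
        (fun q => (M q).map (fun ψ₁' => (ψ₁', q.2))) = π.map (fun p => (p.1, p.2.2)))
    (κ₂ : Kernel (S₁ × S₃) S₂) [IsMarkovKernel κ₂]
    (hκ₂ : π.map (fun p => ((p.1, p.2.2), p.2.1)) =
        (π.map (fun p => (p.1, p.2.2))) ⊗ₘ κ₂) :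
    π.bind (fun p => (κ₃ (p.1, p.2.1)).bind
        (fun ψ₃' => (M (p.1, ψ₃')).bind
          (fun ψ₁' => (κ₂ (ψ₁', ψ₃')).map (fun ψ₂' => (ψ₁', ψ₂', ψ₃'))))) = π := by
  have hf12 : Measurable (fun p : S₁ × S₂ × S₃ => (p.1, p.2.1)) := by fun_prop
  have hf13 : Measurable (fun p : S₁ × S₂ × S₃ => (p.1, p.2.2)) := by fun_prop
  haveI hP12 : IsProbabilityMeasure (π.map (fun p : S₁ × S₂ × S₃ => (p.1, p.2.1))) :=
    Measure.isProbabilityMeasure_map hf12.aemeasurable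
  haveI hP13 : IsProbabilityMeasure (π.map (fun p : S₁ × S₂ × S₃ => (p.1, p.2.2))) :=
    Measure.isProbabilityMeasure_map hf13.aemeasurable
  have hg₂ : Measurable (fun x : (S₁ × S₃) × S₂ => (x.1.1, x.2, x.1.2)) := by fun_prop
  have hgM : Measurable (fun x : (S₁ × S₃) × S₁ => (x.2, x.1.2)) := by fun_prop
  have hgT : Measurable (fun x : (S₁ × S₂) × S₃ => (x.1.1, x.2)) := by fun_prop
  -- measurability of the building blocks
  have hH : Measurable (fun r : S₁ × S₃ => (κ₂ r).map (fun ψ₂' => (r.1, ψ₂', r.2))) := by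
    have h1 : (fun r : S₁ × S₃ => (κ₂ r).map (fun ψ₂' => (r.1, ψ₂', r.2)))
        = fun r => ((κ₂ r).map (Prod.mk r)).map (fun x => (x.1.1, x.2, x.1.2)) := by
      funext r
      rw [Measure.map_map hg₂ measurable_prodMk_left]
      rfl
    rw [h1]
    exact (Measure.measurable_map _ hg₂).comp (SamplerAux.measurable_map_prodMk κ₂)
  have hMk : Measurable (fun q : S₁ × S₃ => (M q).map (fun ψ₁' => (ψ₁', q.2))) := by
    have h1 : (fun q : S₁ × S₃ => (M q).map (fun ψ₁' => (ψ₁', q.2)))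
        = fun q => ((M q).map (Prod.mk q)).map (fun x => (x.2, x.1.2)) := by
      funext q
      rw [Measure.map_map hgM measurable_prodMk_left]
      rfl
    rw [h1]
    exact (Measure.measurable_map _ hgM).comp (SamplerAux.measurable_map_prodMk M)
  have hT : Measurable (fun q : S₁ × S₂ => (κ₃ q).map (fun ψ₃' => (q.1, ψ₃'))) := by
    have h1 : (fun q : S₁ × S₂ => (κ₃ q).map (fun ψ₃' => (q.1, ψ₃')))
        = fun q => ((κ₃ q).map (Prod.mk q)).map (fun x => (x.1.1, x.2)) := by
      funext q
      rw [Measure.map_map hgT measurable_prodMk_left]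
      rfl
    rw [h1]
    exact (Measure.measurable_map _ hgT).comp (SamplerAux.measurable_map_prodMk κ₃)
  have hG : Measurable (fun q : S₁ × S₃ => ((M q).map (fun ψ₁' => (ψ₁', q.2))).bind
      (fun r : S₁ × S₃ => (κ₂ r).map (fun ψ₂' => (r.1, ψ₂', r.2)))) :=
    (Measure.measurable_bind' hH).comp hMk
  have hTcomp : Measurable (fun p : S₁ × S₂ × S₃ =>
      (κ₃ (p.1, p.2.1)).map (fun ψ₃' => (p.1, ψ₃'))) := hT.comp hf12
  calc π.bind (fun p => (κ₃ (p.1, p.2.1)).bind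
        (fun ψ₃' => (M (p.1, ψ₃')).bind
          (fun ψ₁' => (κ₂ (ψ₁', ψ₃')).map (fun ψ₂' => (ψ₁', ψ₂', ψ₃')))))
      = π.bind (fun p => ((κ₃ (p.1, p.2.1)).map (fun ψ₃' => (p.1, ψ₃'))).bind
          (fun q : S₁ × S₃ => ((M q).map (fun ψ₁' => (ψ₁', q.2))).bind
            (fun r : S₁ × S₃ => (κ₂ r).map (fun ψ₂' => (r.1, ψ₂', r.2))))) := by
        refine congrArg _ (funext fun p => ?_)
        rw [SamplerAux.bind_map' _
          (show Measurable fun ψ₃' : S₃ => (p.1, ψ₃') from measurable_const.prodMk measurable_id)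
          hG]
        refine congrArg _ (funext fun ψ₃' => ?_)
        rw [SamplerAux.bind_map' _
          (show Measurable fun ψ₁' : S₁ => (ψ₁', ψ₃') from measurable_id.prodMk measurable_const)
          hH]
    _ = (π.bind (fun p => (κ₃ (p.1, p.2.1)).map (fun ψ₃' => (p.1, ψ₃')))).bind
          (fun q : S₁ × S₃ => ((M q).map (fun ψ₁' => (ψ₁', q.2))).bind
            (fun r : S₁ × S₃ => (κ₂ r).map (fun ψ₂' => (r.1, ψ₂', r.2)))) :=
        (Measure.bind_bind hTcomp.aemeasurable hG.aemeasurable).symm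
    _ = ((π.map (fun p => (p.1, p.2.1))).bind
            (fun q : S₁ × S₂ => (κ₃ q).map (fun ψ₃' => (q.1, ψ₃')))).bind
          (fun q : S₁ × S₃ => ((M q).map (fun ψ₁' => (ψ₁', q.2))).bind
            (fun r : S₁ × S₃ => (κ₂ r).map (fun ψ₂' => (r.1, ψ₂', r.2)))) := by
        rw [SamplerAux.bind_map' π hf12 hT]
    _ = (((π.map (fun p => (p.1, p.2.1))) ⊗ₘ κ₃).map (fun x => (x.1.1, x.2))).bind
          (fun q : S₁ × S₃ => ((M q).map (fun ψ₁' => (ψ₁', q.2))).bind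
            (fun r : S₁ × S₃ => (κ₂ r).map (fun ψ₂' => (r.1, ψ₂', r.2)))) := by
        rw [SamplerAux.map_compProd_bind _ κ₃ hgT]
    _ = ((π.map (fun p => ((p.1, p.2.1), p.2.2))).map (fun x => (x.1.1, x.2))).bind
          (fun q : S₁ × S₃ => ((M q).map (fun ψ₁' => (ψ₁', q.2))).bind
            (fun r : S₁ × S₃ => (κ₂ r).map (fun ψ₂' => (r.1, ψ₂', r.2)))) := by
        rw [← hκ₃]
    _ = (π.map (fun p => (p.1, p.2.2))).bind
          (fun q : S₁ × S₃ => ((M q).map (fun ψ₁' => (ψ₁', q.2))).bind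
            (fun r : S₁ × S₃ => (κ₂ r).map (fun ψ₂' => (r.1, ψ₂', r.2)))) := by
        rw [Measure.map_map hgT
          (show Measurable fun p : S₁ × S₂ × S₃ => ((p.1, p.2.1), p.2.2) from by fun_prop)]
        rfl
    _ = ((π.map (fun p => (p.1, p.2.2))).bind (fun q => (M q).map (fun ψ₁' => (ψ₁', q.2)))).bind
          (fun r : S₁ × S₃ => (κ₂ r).map (fun ψ₂' => (r.1, ψ₂', r.2))) :=
        (Measure.bind_bind hMk.aemeasurable hH.aemeasurable).symm
    _ = (π.map (fun p => (p.1, p.2.2))).bind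
          (fun r : S₁ × S₃ => (κ₂ r).map (fun ψ₂' => (r.1, ψ₂', r.2))) := by rw [hM]
    _ = ((π.map (fun p => (p.1, p.2.2))) ⊗ₘ κ₂).map (fun x => (x.1.1, x.2, x.1.2)) :=
        (SamplerAux.map_compProd_bind _ κ₂ hg₂).symm
    _ = (π.map (fun p => ((p.1, p.2.2), p.2.1))).map (fun x => (x.1.1, x.2, x.1.2)) := by
        rw [← hκ₂]
    _ = π.map (fun p => (p.1, p.2.1, p.2.2)) := by
        rw [Measure.map_map hg₂
          (show Measurable fun p : S₁ × S₂ × S₃ => ((p.1, p.2.2), p.2.1) from by fun_prop)]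
        rfl
    _ = π := by
        have : (fun p : S₁ × S₂ × S₃ => (p.1, p.2.1, p.2.2)) = id := by funext p; rfl
        rw [this, Measure.map_id]
end
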